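/- Let D be an oriented graph whose missing graph G is a comb (with sets A_i, M_i, X_i, Y_i as in the structural definition). Then every vertex of the dependency digraph Δ(D) has out-degree at most 1 and in-degree at most 1. -/

import Mathlib

variable {V : Type*}

/-- An oriented graph: no loops and no digons. -/
def Oriented (E : V → V → Prop) : Prop :=
  (∀ x, ¬ E x x) ∧ ∀ x y, E x y → ¬ E y x

/-- `{x, y}` is a missing edge of the digraph `E`. -/
def Missing (E : V → V → Prop) (x y : V) : Prop :=
  x ≠ y ∧ ¬ E x y ∧ ¬ E y x

/-- The first out-neighborhood of `v`. -/
def NPlus (E : V → V → Prop) (v : V) : Set V := {y | E v y}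

/-- The second out-neighborhood of `v`: vertices at directed distance exactly 2 from `v`. -/
def NPlusPlus (E : V → V → Prop) (v : V) : Set V :=
  {y | y ≠ v ∧ ¬ E v y ∧ ∃ z, E v z ∧ E z y}

/-- The missing edge `x₁y₁` loses to the missing edge `x₂y₂`. -/
def Loses (E : V → V → Prop) (x1 y1 x2 y2 : V) : Prop :=
  E x1 x2 ∧ y2 ∉ NPlus E x1 ∪ NPlusPlus E x1 ∧
  E y1 y2 ∧ x2 ∉ NPlus E y1 ∪ NPlusPlus E y1

/-- There is an arc in the dependency digraph from the missing edge `{a,b}` to the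
missing edge `{c,d}`, i.e. `ab` loses to `cd` under some labelling. -/
def DepArc (E : V → V → Prop) (a b c d : V) : Prop :=
  Loses E a b c d ∨ Loses E a b d c

/-- The missing edge `ab` is good. -/
def Good (E : V → V → Prop) (a b : V) : Prop :=
  (∀ v, v ≠ a → v ≠ b → E v a → b ∈ NPlus E v ∪ NPlusPlus E v) ∨
  (∀ v, v ≠ a → v ≠ b → E v b → a ∈ NPlus E v ∪ NPlusPlus E v)

/-- The missing graph of the digraph `E`. -/
def missingGraph (E : V → V → Prop) : SimpleGraph V :=
  SimpleGraph.fromRel (fun x y => ¬ E x y ∧ ¬ E y x)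

/-- The cycle graph on `n` vertices. -/
def cycleGraph (n : ℕ) : SimpleGraph (Fin n) :=
  SimpleGraph.fromRel (fun x y => (x.val + 1) % n = y.val)

/-- The chair: vertices `0,1,2,3,4` with exactly the edges `01, 12, 23, 24`. -/
def chairGraph : SimpleGraph (Fin 5) :=
  SimpleGraph.fromRel (fun x y =>
    (x = 0 ∧ y = 1) ∨ (x = 1 ∧ y = 2) ∨ (x = 2 ∧ y = 3) ∨ (x = 2 ∧ y = 4))

/-- A comb: no induced `C₄`, co-`C₄`, `C₅`, chair or co-chair. -/
def IsComb {W : Type*} (G : SimpleGraph W) : Prop :=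
  IsEmpty (cycleGraph 4 ↪g G) ∧ IsEmpty ((cycleGraph 4)ᶜ ↪g G) ∧
  IsEmpty (cycleGraph 5 ↪g G) ∧ IsEmpty (chairGraph ↪g G) ∧
  IsEmpty (chairGraphᶜ ↪g G)

/-- A threshold graph: no induced `C₄`, co-`C₄` or `P₄`. -/
def IsThresholdGraph {W : Type*} (G : SimpleGraph W) : Prop :=
  IsEmpty (cycleGraph 4 ↪g G) ∧ IsEmpty ((cycleGraph 4)ᶜ ↪g G) ∧
  IsEmpty (SimpleGraph.pathGraph 4 ↪g G)

/-- Every vertex of the dependency digraph of `E` has out-degree and in-degree at most 1. -/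
def DepDegLeOne (E : V → V → Prop) : Prop :=
  ∀ a b, Missing E a b →
    (∀ c d c' d', Missing E c d → Missing E c' d' →
      DepArc E a b c d → DepArc E a b c' d' → s(c, d) = s(c', d')) ∧
    (∀ c d c' d', Missing E c d → Missing E c' d' →
      DepArc E c d a b → DepArc E c' d' a b → s(c, d) = s(c', d'))

/-- The dependency digraph of `E` has no directed cycle. -/
def NoDepCycle (E : V → V → Prop) : Prop :=
  ¬ ∃ (k : ℕ) (a b : ℕ → V), 0 < k ∧
    (∀ i < k, Missing E (a i) (b i)) ∧
    (∀ i < k, ∀ j < k, i ≠ j → s(a i, b i) ≠ s(a j, b j)) ∧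
    (∀ i < k, DepArc E (a i) (b i) (a ((i + 1) % k)) (b ((i + 1) % k)))

section Aux

variable {E : V → V → Prop}

lemma mAdj {x y : V} : (missingGraph E).Adj x y ↔ x ≠ y ∧ ¬E x y ∧ ¬E y x := by
  simp only [missingGraph, SimpleGraph.fromRel_adj]
  tauto

lemma adj_of {x y : V} (h1 : x ≠ y) (h2 : ¬E x y) (h3 : ¬E y x) :
    (missingGraph E).Adj x y := mAdj.mpr ⟨h1, h2, h3⟩

lemma nadj1 {x y : V} (h : E x y) : ¬(missingGraph E).Adj x y :=
  fun a => (mAdj.mp a).2.1 h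

lemma nadj2 {x y : V} (h : E y x) : ¬(missingGraph E).Adj x y :=
  fun a => (mAdj.mp a).2.2 h

lemma missing_symm {a b : V} (h : Missing E a b) : Missing E b a :=
  ⟨h.1.symm, h.2.2, h.2.1⟩

lemma loses_swap {a b c d : V} (h : Loses E a b c d) : Loses E b a d c :=
  ⟨h.2.2.1, h.2.2.2, h.1, h.2.1⟩

lemma loses_rev {a b c d : V} (h : Loses E c d a b) :
    Loses (fun x y => E y x) a b c d := by
  obtain ⟨hca, hb, hdb, ha⟩ := h
  refine ⟨hca, ?_, hdb, ?_⟩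
  · rintro (h' | ⟨hne, hnd, z, hz1, hz2⟩)
    · exact ha (Or.inl h')
    · exact ha (Or.inr ⟨hne.symm, hnd, z, hz2, hz1⟩)
  · rintro (h' | ⟨hne, hnc, z, hz1, hz2⟩)
    · exact hb (Or.inl h')
    · exact hb (Or.inr ⟨hne.symm, hnc, z, hz2, hz1⟩)

lemma loses_facts {a b c d : V} (hor : Oriented E)
    (hab : Missing E a b) (h : Loses E a b c d) :
    E a c ∧ E b d ∧ ¬E a d ∧ ¬E b c ∧
    (∀ z, E a z → ¬E z d) ∧ (∀ z, E b z → ¬E z c) ∧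
    a ≠ c ∧ a ≠ d ∧ b ≠ c ∧ b ≠ d := by
  obtain ⟨hac, hd, hbd, hc⟩ := h
  have had : ¬E a d := fun h => hd (Or.inl h)
  have hbc : ¬E b c := fun h => hc (Or.inl h)
  have ead : a ≠ d := by rintro rfl; exact hab.2.2 hbd
  have ebc : b ≠ c := by rintro rfl; exact hab.2.1 hac
  have eac : a ≠ c := by rintro rfl; exact hor.1 _ hac
  have ebd : b ≠ d := by rintro rfl; exact hor.1 _ hbd
  refine ⟨hac, hbd, had, hbc, ?_, ?_, eac, ead, ebc, ebd⟩
  · intro z h1 h2; exact hd (Or.inr ⟨ead.symm, had, z, h1, h2⟩)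
  · intro z h1 h2; exact hc (Or.inr ⟨ebc.symm, hbc, z, h1, h2⟩)

lemma noC4 (h : IsEmpty (cycleGraph 4 ↪g missingGraph E))
    (v0 v1 v2 v3 : V)
    (h01 : (missingGraph E).Adj v0 v1) (h12 : (missingGraph E).Adj v1 v2)
    (h23 : (missingGraph E).Adj v2 v3) (h03 : (missingGraph E).Adj v0 v3)
    (n02 : ¬(missingGraph E).Adj v0 v2) (n13 : ¬(missingGraph E).Adj v1 v3)
    (e02 : v0 ≠ v2) (e13 : v1 ≠ v3) : False := by
  apply h.false
  refine ⟨⟨![v0,v1,v2,v3], ?_⟩, @fun i j => ?_⟩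
  · intro i j hij
    have h01' := h01.ne
    have h12' := h12.ne
    have h23' := h23.ne
    have h03' := h03.ne
    fin_cases i <;> fin_cases j <;> simp_all
  · change (missingGraph E).Adj (![v0,v1,v2,v3] i) (![v0,v1,v2,v3] j) ↔ _
    fin_cases i <;> fin_cases j <;>
      simp_all [cycleGraph, SimpleGraph.fromRel_adj, (missingGraph E).adj_comm] <;> decide

lemma no2K2 (h : IsEmpty ((cycleGraph 4)ᶜ ↪g missingGraph E))
    (v0 v1 v2 v3 : V)
    (h01 : (missingGraph E).Adj v0 v1) (h23 : (missingGraph E).Adj v2 v3)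
    (n02 : ¬(missingGraph E).Adj v0 v2) (n03 : ¬(missingGraph E).Adj v0 v3)
    (n12 : ¬(missingGraph E).Adj v1 v2) (n13 : ¬(missingGraph E).Adj v1 v3)
    (e02 : v0 ≠ v2) (e03 : v0 ≠ v3) (e12 : v1 ≠ v2) (e13 : v1 ≠ v3) : False := by
  apply h.false
  refine ⟨⟨![v0,v2,v1,v3], ?_⟩, @fun i j => ?_⟩
  · intro i j hij
    have h01' := h01.ne
    have h23' := h23.ne
    fin_cases i <;> fin_cases j <;> simp_all
  · change (missingGraph E).Adj (![v0,v2,v1,v3] i) (![v0,v2,v1,v3] j) ↔ _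
    fin_cases i <;> fin_cases j <;>
      simp_all [cycleGraph, SimpleGraph.compl_adj, SimpleGraph.fromRel_adj,
        (missingGraph E).adj_comm] <;> decide

lemma noChair (h : IsEmpty (chairGraph ↪g missingGraph E))
    (v0 v1 v2 v3 v4 : V)
    (h01 : (missingGraph E).Adj v0 v1) (h12 : (missingGraph E).Adj v1 v2)
    (h23 : (missingGraph E).Adj v2 v3) (h24 : (missingGraph E).Adj v2 v4)
    (n02 : ¬(missingGraph E).Adj v0 v2) (n03 : ¬(missingGraph E).Adj v0 v3)
    (n04 : ¬(missingGraph E).Adj v0 v4) (n13 : ¬(missingGraph E).Adj v1 v3)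
    (n14 : ¬(missingGraph E).Adj v1 v4) (n34 : ¬(missingGraph E).Adj v3 v4)
    (e02 : v0 ≠ v2) (e03 : v0 ≠ v3) (e04 : v0 ≠ v4) (e13 : v1 ≠ v3)
    (e14 : v1 ≠ v4) (e34 : v3 ≠ v4) : False := by
  apply h.false
  refine ⟨⟨![v0,v1,v2,v3,v4], ?_⟩, @fun i j => ?_⟩
  · intro i j hij
    have h01' := h01.ne
    have h12' := h12.ne
    have h23' := h23.ne
    have h24' := h24.ne
    fin_cases i <;> fin_cases j <;> simp_all
  · change (missingGraph E).Adj (![v0,v1,v2,v3,v4] i) (![v0,v1,v2,v3,v4] j) ↔ _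
    fin_cases i <;> fin_cases j <;>
      simp_all [chairGraph, SimpleGraph.fromRel_adj, (missingGraph E).adj_comm] <;> decide

lemma noCoChair (h : IsEmpty (chairGraphᶜ ↪g missingGraph E))
    (v0 v1 v2 v3 v4 : V)
    (h02 : (missingGraph E).Adj v0 v2) (h03 : (missingGraph E).Adj v0 v3)
    (h04 : (missingGraph E).Adj v0 v4) (h13 : (missingGraph E).Adj v1 v3)
    (h14 : (missingGraph E).Adj v1 v4) (h34 : (missingGraph E).Adj v3 v4)
    (n01 : ¬(missingGraph E).Adj v0 v1) (n12 : ¬(missingGraph E).Adj v1 v2)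
    (n23 : ¬(missingGraph E).Adj v2 v3) (n24 : ¬(missingGraph E).Adj v2 v4)
    (e01 : v0 ≠ v1) (e12 : v1 ≠ v2) (e23 : v2 ≠ v3) (e24 : v2 ≠ v4) : False := by
  apply h.false
  refine ⟨⟨![v0,v1,v2,v3,v4], ?_⟩, @fun i j => ?_⟩
  · intro i j hij
    have h02' := h02.ne
    have h03' := h03.ne
    have h04' := h04.ne
    have h13' := h13.ne
    have h14' := h14.ne
    have h34' := h34.ne
    fin_cases i <;> fin_cases j <;> simp_all
  · change (missingGraph E).Adj (![v0,v1,v2,v3,v4] i) (![v0,v1,v2,v3,v4] j) ↔ _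
    fin_cases i <;> fin_cases j <;>
      simp_all [chairGraph, SimpleGraph.compl_adj, SimpleGraph.fromRel_adj,
        (missingGraph E).adj_comm] <;> decide

lemma core (hcomb : IsComb (missingGraph E)) {a b c d d' : V}
    (hAab : (missingGraph E).Adj a b) (hAbc : (missingGraph E).Adj b c)
    (hAcd : (missingGraph E).Adj c d) (hAcd' : (missingGraph E).Adj c d')
    (hac : E a c) (hbd : E b d) (hbd' : E b d')
    (had : ¬E a d) (had' : ¬E a d')
    (eac : a ≠ c) (ead : a ≠ d) (ead' : a ≠ d') (ebd : b ≠ d) (ebd' : b ≠ d')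
    (edd' : d ≠ d') : False := by
  have nac : ¬(missingGraph E).Adj a c := nadj1 hac
  have nbd : ¬(missingGraph E).Adj b d := nadj1 hbd
  have nbd' : ¬(missingGraph E).Adj b d' := nadj1 hbd'
  have hda : E d a := by
    by_contra hda
    exact noC4 hcomb.1 a b c d hAab hAbc hAcd (adj_of ead had hda) nac nbd eac ebd
  have hd'a : E d' a := by
    by_contra h
    exact noC4 hcomb.1 a b c d' hAab hAbc hAcd' (adj_of ead' had' h) nac nbd' eac ebd'
  by_cases hdd : (missingGraph E).Adj d d'
  · exact no2K2 hcomb.2.1 a b d d' hAab hdd (nadj2 hda) (nadj2 hd'a) nbd nbd'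
      ead ead' ebd ebd'
  · exact noChair hcomb.2.2.2.1 a b c d d' hAab hAbc hAcd hAcd' nac (nadj2 hda)
      (nadj2 hd'a) nbd nbd' hdd eac ead ead' ebd ebd' edd'

lemma caseA (hor : Oriented E) (hcomb : IsComb (missingGraph E)) {a b c d d' : V}
    (hab : Missing E a b) (hcd : Missing E c d) (hcd' : Missing E c d')
    (h1 : Loses E a b c d) (h2 : Loses E a b c d') (hdd : d ≠ d') : False := by
  obtain ⟨hac, hbd, had, hbc, Fad, Fbc, eac, ead, ebc, ebd⟩ := loses_facts hor hab h1
  obtain ⟨-, hbd', had', hbc', Fad', Fbc', -, ead', -, ebd'⟩ := loses_facts hor hab h2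
  have hAab : (missingGraph E).Adj a b := adj_of hab.1 hab.2.1 hab.2.2
  have hAcd : (missingGraph E).Adj c d := adj_of hcd.1 hcd.2.1 hcd.2.2
  have hAcd' : (missingGraph E).Adj c d' := adj_of hcd'.1 hcd'.2.1 hcd'.2.2
  by_cases hcb : E c b
  · have hda : ¬E d a := by
      intro hda
      exact no2K2 hcomb.2.1 a b c d hAab hAcd (nadj1 hac) (nadj2 hda) (nadj2 hcb)
        (nadj1 hbd) eac ead ebc ebd
    have hd'a : ¬E d' a := by
      intro h
      exact no2K2 hcomb.2.1 a b c d' hAab hAcd' (nadj1 hac) (nadj2 h) (nadj2 hcb)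
        (nadj1 hbd') eac ead' ebc ebd'
    by_cases hdd2 : (missingGraph E).Adj d d'
    · exact noCoChair hcomb.2.2.2.2 a c b d d' hAab (adj_of ead had hda)
        (adj_of ead' had' hd'a) hAcd hAcd' hdd2 (nadj1 hac) (nadj1 hcb)
        (nadj1 hbd) (nadj1 hbd') eac ebc.symm ebd ebd'
    · exact noC4 hcomb.1 a d c d' (adj_of ead had hda) hAcd.symm hAcd'
        (adj_of ead' had' hd'a) (nadj1 hac) hdd2 eac hdd
  · have hAbc : (missingGraph E).Adj b c := adj_of ebc hbc hcb
    exact core hcomb hAab hAbc hAcd hAcd' hac hbd hbd' had had'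
      eac ead ead' ebd ebd' hdd

lemma caseC1 (hor : Oriented E) (hcomb : IsComb (missingGraph E)) {a b c d c' d' : V}
    (hab : Missing E a b) (hcd : Missing E c d) (hcd' : Missing E c' d')
    (h1 : Loses E a b c d) (h2 : Loses E a b c' d')
    (hdd : d ≠ d') (hAcc : (missingGraph E).Adj c c') : False := by
  obtain ⟨hac, hbd, had, hbc, Fad, Fbc, eac, ead, ebc, ebd⟩ := loses_facts hor hab h1
  obtain ⟨hac', hbd', had', hbc', Fad', Fbc', eac', ead', ebc', ebd'⟩ :=
    loses_facts hor hab h2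
  have ecd' : c ≠ d' := by rintro rfl; exact hbc hbd'
  have ec'd : c' ≠ d := by rintro rfl; exact had hac'
  have hAab : (missingGraph E).Adj a b := adj_of hab.1 hab.2.1 hab.2.2
  have hAcd : (missingGraph E).Adj c d := adj_of hcd.1 hcd.2.1 hcd.2.2
  have hAc'd' : (missingGraph E).Adj c' d' := adj_of hcd'.1 hcd'.2.1 hcd'.2.2
  have hAcd'x : (missingGraph E).Adj c d' :=
    adj_of ecd' (Fad' c hac) (fun h => Fbc d' hbd' h)
  have hAc'd : (missingGraph E).Adj c' d :=
    adj_of ec'd (fun h => Fad c' hac' h) (fun h => Fbc' d hbd h)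
  have hbcb : ¬E c b ∨ ¬E c' b := by
    by_contra h
    push_neg at h
    exact no2K2 hcomb.2.1 a b c c' hAab hAcc (nadj1 hac) (nadj1 hac')
      (nadj2 h.1) (nadj2 h.2) eac eac' ebc ebc'
  rcases hbcb with h | h
  · exact core hcomb hAab (adj_of ebc hbc h) hAcd hAcd'x hac hbd hbd' had had'
      eac ead ead' ebd ebd' hdd
  · exact core hcomb hAab (adj_of ebc' hbc' h) hAc'd' hAc'd hac' hbd' hbd had' had
      eac' ead' ead ebd' ebd hdd.symm

lemma caseC (hor : Oriented E) (hcomb : IsComb (missingGraph E)) {a b c d c' d' : V}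
    (hab : Missing E a b) (hcd : Missing E c d) (hcd' : Missing E c' d')
    (h1 : Loses E a b c d) (h2 : Loses E a b c' d')
    (hcc : c ≠ c') (hdd : d ≠ d') : False := by
  obtain ⟨hac, hbd, had, hbc, Fad, Fbc, eac, ead, ebc, ebd⟩ := loses_facts hor hab h1
  obtain ⟨hac', hbd', had', hbc', Fad', Fbc', eac', ead', ebc', ebd'⟩ :=
    loses_facts hor hab h2
  have ecd' : c ≠ d' := by rintro rfl; exact hbc hbd'
  have ec'd : c' ≠ d := by rintro rfl; exact had hac'
  have hAcd : (missingGraph E).Adj c d := adj_of hcd.1 hcd.2.1 hcd.2.2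
  have hAc'd' : (missingGraph E).Adj c' d' := adj_of hcd'.1 hcd'.2.1 hcd'.2.2
  have hAcd'x : (missingGraph E).Adj c d' :=
    adj_of ecd' (Fad' c hac) (fun h => Fbc d' hbd' h)
  have hAc'd : (missingGraph E).Adj c' d :=
    adj_of ec'd (fun h => Fad c' hac' h) (fun h => Fbc' d hbd h)
  by_cases h : (missingGraph E).Adj c c'
  · exact caseC1 hor hcomb hab hcd hcd' h1 h2 hdd h
  · by_cases h2' : (missingGraph E).Adj d d'
    · exact caseC1 hor hcomb (missing_symm hab) (missing_symm hcd)
        (missing_symm hcd') (loses_swap h1) (loses_swap h2) hcc h2'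
    · exact noC4 hcomb.1 c d c' d' hAcd hAc'd.symm hAc'd' hAcd'x h h2' hcc hdd

lemma out_unique (hor : Oriented E) (hcomb : IsComb (missingGraph E)) {a b c d c' d' : V}
    (hab : Missing E a b) (hcd : Missing E c d) (hcd' : Missing E c' d')
    (h1 : Loses E a b c d) (h2 : Loses E a b c' d') : c = c' ∧ d = d' := by
  by_cases hcc : c = c'
  · subst hcc
    by_cases hdd : d = d'
    · exact ⟨rfl, hdd⟩
    · exact (caseA hor hcomb hab hcd hcd' h1 h2 hdd).elim
  · by_cases hdd : d = d'
    · subst hdd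
      exact (caseA hor hcomb (missing_symm hab) (missing_symm hcd)
        (missing_symm hcd') (loses_swap h1) (loses_swap h2) hcc).elim
    · exact (caseC hor hcomb hab hcd hcd' h1 h2 hcc hdd).elim

end Aux

/-- If the missing graph of an oriented graph `D` is a comb, then every vertex of the
dependency digraph of `D` has out-degree at most 1 and in-degree at most 1. -/
theorem depDeg_le_one_of_missing_comb [Fintype V] (E : V → V → Prop)
    (hor : Oriented E) (hcomb : IsComb (missingGraph E)) :
    DepDegLeOne E := by
  intro a b hab
  constructor
  · intro c d c' d' hcd hcd' h h'
    obtain ⟨u, v, hu, huv, hs⟩ : ∃ u v, Loses E a b u v ∧ Missing E u v ∧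
        s(u, v) = s(c, d) := by
      rcases h with h | h
      · exact ⟨c, d, h, hcd, rfl⟩
      · exact ⟨d, c, h, missing_symm hcd, Sym2.eq_swap⟩
    obtain ⟨u', v', hu', huv', hs'⟩ : ∃ u' v', Loses E a b u' v' ∧ Missing E u' v' ∧
        s(u', v') = s(c', d') := by
      rcases h' with h' | h'
      · exact ⟨c', d', h', hcd', rfl⟩
      · exact ⟨d', c', h', missing_symm hcd', Sym2.eq_swap⟩
    obtain ⟨h3, h4⟩ := out_unique hor hcomb hab huv huv' hu hu'
    rw [← hs, ← hs', h3, h4]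
  · intro c d c' d' hcd hcd' h h'
    have hor' : Oriented (fun x y => E y x) := ⟨hor.1, fun x y h1 h2 => hor.2 y x h1 h2⟩
    have hmg : missingGraph (fun x y => E y x) = missingGraph E := by
      ext x y
      simp only [missingGraph, SimpleGraph.fromRel_adj]
      tauto
    have hcomb' : IsComb (missingGraph (fun x y => E y x)) := hmg ▸ hcomb
    have hab' : Missing (fun x y => E y x) a b := ⟨hab.1, hab.2.2, hab.2.1⟩
    obtain ⟨u, v, hu, huv, hs⟩ : ∃ u v, Loses (fun x y => E y x) a b u v ∧
        Missing (fun x y => E y x) u v ∧ s(u, v) = s(c, d) := by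
      rcases h with h | h
      · exact ⟨c, d, loses_rev h, ⟨hcd.1, hcd.2.2, hcd.2.1⟩, rfl⟩
      · exact ⟨d, c, loses_swap (loses_rev h), ⟨hcd.1.symm, hcd.2.1, hcd.2.2⟩,
          Sym2.eq_swap⟩
    obtain ⟨u', v', hu', huv', hs'⟩ : ∃ u' v', Loses (fun x y => E y x) a b u' v' ∧
        Missing (fun x y => E y x) u' v' ∧ s(u', v') = s(c', d') := by
      rcases h' with h' | h'
      · exact ⟨c', d', loses_rev h', ⟨hcd'.1, hcd'.2.2, hcd'.2.1⟩, rfl⟩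
      · exact ⟨d', c', loses_swap (loses_rev h'), ⟨hcd'.1.symm, hcd'.2.1, hcd'.2.2⟩,
          Sym2.eq_swap⟩
    obtain ⟨h3, h4⟩ := out_unique hor' hcomb' hab' huv huv' hu hu'
    rw [← hs, ← hs', h3, h4]
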